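/- arXiv:2402.04676 — 2 statements merged into one kernel-verified Lean document; each statement's English description precedes it below -/
import Mathlib

section
/- The empirical CVaR at level α equals the dual Rockafellar–Uryasev formula: CVaR_α(ℓ) = min over t ∈ ℝ of t + (1/(αn)) ∑_i max(ℓ_i − t, 0). -/
open Finset

/-- Weak duality: any feasible reweighting value is at most the RU objective at any `t`. -/
lemma cvar_weak {n : ℕ} {α : ℝ} (ℓ w : Fin n → ℝ)
    (hw : ∀ i, 0 ≤ w i ∧ w i ≤ 1 / (α * n)) (hs : ∑ i, w i = 1) (t : ℝ) :
    ∑ i, w i * ℓ i ≤ t + (1 / (α * n)) * ∑ i, max (ℓ i - t) 0 := by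
  have key : ∑ i, w i * (ℓ i - t) ≤ (1 / (α * n)) * ∑ i, max (ℓ i - t) 0 := by
    rw [Finset.mul_sum]
    refine Finset.sum_le_sum fun i _ => ?_
    rcases le_or_gt t (ℓ i) with h | h
    · rw [max_eq_left (by linarith)]
      exact mul_le_mul_of_nonneg_right (hw i).2 (by linarith)
    · rw [max_eq_right (by linarith), mul_zero]
      exact mul_nonpos_of_nonneg_of_nonpos (hw i).1 (by linarith)
  have h2 : ∑ i, w i * (ℓ i - t) = ∑ i, w i * ℓ i - t := by
    simp [mul_sub, Finset.sum_sub_distrib, ← Finset.sum_mul, hs]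
  linarith

/-- Existence of a quantile `t` in the range of `ℓ` with the right tail counts. -/
lemma exists_quantile {n : ℕ} {α : ℝ} (hn : 0 < n) (hα : 0 < α) (hα1 : α ≤ 1)
    (ℓ : Fin n → ℝ) :
    ∃ t ∈ Set.range ℓ,
      ((univ.filter (fun i => t < ℓ i)).card : ℝ) ≤ α * n ∧
      (α * n : ℝ) ≤ ((univ.filter (fun i => t ≤ ℓ i)).card : ℝ) := by
  have hne : (univ : Finset (Fin n)).Nonempty := univ_nonempty_iff.2 (Fin.pos_iff_nonempty.mp hn)
  set V : Finset ℝ := univ.image ℓ with hV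
  have hVne : V.Nonempty := hne.image ℓ
  set S : Finset ℝ := V.filter (fun v => ((univ.filter (fun i => v < ℓ i)).card : ℝ) ≤ α * n)
    with hS
  have hSne : S.Nonempty := by
    refine ⟨V.max' hVne, mem_filter.2 ⟨V.max'_mem hVne, ?_⟩⟩
    have : univ.filter (fun i => V.max' hVne < ℓ i) = ∅ := by
      refine filter_eq_empty_iff.2 fun i _ => not_lt.2 ?_
      exact V.le_max' _ (mem_image.2 ⟨i, mem_univ i, rfl⟩)
    rw [this]
    simp
    positivity
  set t := S.min' hSne with ht
  have htS : t ∈ S := S.min'_mem hSne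
  have htV : t ∈ V := (mem_filter.1 htS).1
  obtain ⟨i0, _, hi0⟩ := mem_image.1 htV
  refine ⟨t, ⟨i0, hi0⟩, (mem_filter.1 htS).2, ?_⟩
  by_cases hall : ∀ i, t ≤ ℓ i
  · have : univ.filter (fun i => t ≤ ℓ i) = univ := filter_eq_self.2 fun i _ => hall i
    rw [this, card_univ, Fintype.card_fin]
    have hnr : (0:ℝ) < n := by exact_mod_cast hn
    calc α * n ≤ 1 * n := by nlinarith
    _ = n := one_mul _
  · push_neg at hall
    obtain ⟨j, hj⟩ := hall
    set W : Finset ℝ := V.filter (fun v => v < t) with hW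
    have hWne : W.Nonempty := ⟨ℓ j, mem_filter.2 ⟨mem_image.2 ⟨j, mem_univ j, rfl⟩, hj⟩⟩
    set v' := W.max' hWne with hv'
    have hv'V : v' ∈ V := (mem_filter.1 (W.max'_mem hWne)).1
    have hv't : v' < t := (mem_filter.1 (W.max'_mem hWne)).2
    have hv'S : v' ∉ S := fun h => absurd (S.min'_le _ h) (not_le.2 hv't)
    have hbig : α * n < ((univ.filter (fun i => v' < ℓ i)).card : ℝ) := by
      by_contra h
      exact hv'S (mem_filter.2 ⟨hv'V, not_lt.1 h⟩)
    have hsub : univ.filter (fun i => v' < ℓ i) ⊆ univ.filter (fun i => t ≤ ℓ i) := by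
      intro i hi
      rw [mem_filter] at hi ⊢
      refine ⟨mem_univ i, ?_⟩
      by_contra hlt
      push_neg at hlt
      have : ℓ i ∈ W := mem_filter.2 ⟨mem_image.2 ⟨i, mem_univ i, rfl⟩, hlt⟩
      exact absurd (W.le_max' _ this) (not_le.2 hi.2)
    have hcard := card_le_card hsub
    have hcast : ((univ.filter (fun i => v' < ℓ i)).card : ℝ)
        ≤ ((univ.filter (fun i => t ≤ ℓ i)).card : ℝ) := by exact_mod_cast hcard
    linarith

/-- Strong duality at a quantile `t`: a feasible `w` attains the RU objective at `t`. -/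
lemma cvar_attain {n : ℕ} {α : ℝ} (hn : 0 < n) (hα : 0 < α)
    (ℓ : Fin n → ℝ)
    (t : ℝ) (htr : t ∈ Set.range ℓ)
    (hp : ((univ.filter (fun i => t < ℓ i)).card : ℝ) ≤ α * n)
    (hB : (α * n : ℝ) ≤ ((univ.filter (fun i => t ≤ ℓ i)).card : ℝ)) :
    ∃ w : Fin n → ℝ,
      (∀ i, 0 ≤ w i ∧ w i ≤ 1 / (α * n)) ∧ (∑ i, w i) = 1 ∧
      (∑ i, w i * ℓ i) = t + (1 / (α * n)) * ∑ i, max (ℓ i - t) 0 := by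
  have hn' : (0:ℝ) < n := by exact_mod_cast hn
  have hαn : (0:ℝ) < α * n := by positivity
  set c : ℝ := 1 / (α * n) with hc
  have hc0 : 0 < c := by positivity
  have hαnc : (α * n) * c = 1 := by rw [hc]; field_simp
  set A : Finset (Fin n) := univ.filter (fun i => t < ℓ i) with hA
  set T : Finset (Fin n) := univ.filter (fun i => ℓ i = t) with hT
  set p : ℕ := A.card with hpdef
  set q : ℕ := T.card with hqdef
  have hq0 : 0 < q := by
    obtain ⟨i0, hi0⟩ := htr
    exact card_pos.2 ⟨i0, mem_filter.2 ⟨mem_univ i0, hi0⟩⟩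
  have hq0' : (0:ℝ) < q := by exact_mod_cast hq0
  set r : ℝ := 1 - p * c with hr
  have hBcard : (univ.filter (fun i => t ≤ ℓ i)) = A ∪ T := by
    ext i
    simp only [hA, hT, mem_filter, mem_union, mem_univ, true_and]
    constructor
    · intro h; rcases lt_or_eq_of_le h with h | h
      · exact Or.inl h
      · exact Or.inr h.symm
    · rintro (h | h); exacts [le_of_lt h, le_of_eq h.symm]
  have hdisj : Disjoint A T := by
    rw [disjoint_left]
    intro i hiA hiT
    rw [hA, mem_filter] at hiA
    rw [hT, mem_filter] at hiT
    exact absurd hiT.2 (ne_of_gt hiA.2)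
  have hpq : (α * n : ℝ) ≤ (p : ℝ) + q := by
    have := hB
    rw [hBcard, card_union_of_disjoint hdisj] at this
    exact_mod_cast this
  have hpc : (p:ℝ) * c ≤ 1 := by
    nlinarith [mul_le_mul_of_nonneg_right hp hc0.le]
  have hr0 : 0 ≤ r := by rw [hr]; linarith
  have hrqc : r ≤ (q:ℝ) * c := by
    have := mul_le_mul_of_nonneg_right hpq hc0.le
    rw [hαnc, add_mul] at this
    rw [hr]; linarith
  have hTT : univ.filter (fun i => (¬ t < ℓ i) ∧ ℓ i = t) = T := by
    ext i; simp only [hT, mem_filter, mem_univ, true_and]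
    exact ⟨fun h => h.2, fun h => ⟨by rw [h]; exact lt_irrefl t, h⟩⟩
  refine ⟨fun i => if t < ℓ i then c else if ℓ i = t then r / q else 0, ?_, ?_, ?_⟩
  · intro i
    dsimp only
    by_cases h1 : t < ℓ i
    · rw [if_pos h1]; exact ⟨hc0.le, le_rfl⟩
    · rw [if_neg h1]
      by_cases h2 : ℓ i = t
      · rw [if_pos h2]
        refine ⟨div_nonneg hr0 hq0'.le, ?_⟩
        rw [div_le_iff₀ hq0']
        calc r ≤ (q:ℝ) * c := hrqc
        _ = c * q := mul_comm _ _
      · rw [if_neg h2]; exact ⟨le_rfl, hc0.le⟩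
  · rw [← Finset.sum_filter_add_sum_filter_not univ (fun i => t < ℓ i)]
    have e1 : ∑ i ∈ univ.filter (fun i => t < ℓ i),
        (if t < ℓ i then c else if ℓ i = t then r / q else 0) = p * c := by
      rw [Finset.sum_congr rfl (fun i hi => by rw [if_pos (mem_filter.1 hi).2]),
        Finset.sum_const, ← hA, ← hpdef, nsmul_eq_mul]
    have e2 : ∑ i ∈ univ.filter (fun i => ¬ t < ℓ i),
        (if t < ℓ i then c else if ℓ i = t then r / q else 0) = r := by
      rw [Finset.sum_congr rfl (fun i hi => by rw [if_neg (mem_filter.1 hi).2]),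
        ← Finset.sum_filter, Finset.filter_filter, hTT, Finset.sum_const, ← hqdef,
        nsmul_eq_mul]
      field_simp
    rw [e1, e2, hr]; ring
  · have emax : ∑ i, max (ℓ i - t) 0 = ∑ i ∈ A, (ℓ i - t) := by
      rw [← Finset.sum_filter_add_sum_filter_not univ (fun i => t < ℓ i), ← hA]
      have z : ∑ i ∈ univ.filter (fun i => ¬ t < ℓ i), max (ℓ i - t) 0 = 0 := by
        refine Finset.sum_eq_zero fun i hi => ?_
        have := (mem_filter.1 hi).2
        rw [max_eq_right (by push_neg at this; linarith)]
      have m : ∑ i ∈ A, max (ℓ i - t) 0 = ∑ i ∈ A, (ℓ i - t) := by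
        refine Finset.sum_congr rfl fun i hi => ?_
        have := (mem_filter.1 hi).2
        rw [max_eq_left (by linarith)]
      rw [z, m, add_zero]
    rw [← Finset.sum_filter_add_sum_filter_not univ (fun i => t < ℓ i)]
    have e1 : ∑ i ∈ univ.filter (fun i => t < ℓ i),
        (if t < ℓ i then c else if ℓ i = t then r / q else 0) * ℓ i = c * ∑ i ∈ A, ℓ i := by
      rw [Finset.mul_sum]
      exact Finset.sum_congr rfl (fun i hi => by rw [if_pos (mem_filter.1 hi).2])
    have e2 : ∑ i ∈ univ.filter (fun i => ¬ t < ℓ i),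
        (if t < ℓ i then c else if ℓ i = t then r / q else 0) * ℓ i = r * t := by
      rw [Finset.sum_congr rfl (fun i hi => by rw [if_neg (mem_filter.1 hi).2])]
      have step : ∑ i ∈ univ.filter (fun i => ¬ t < ℓ i), (if ℓ i = t then r / q else 0) * ℓ i
          = ∑ i ∈ univ.filter (fun i => ¬ t < ℓ i), (if ℓ i = t then r / q * t else 0) := by
        refine Finset.sum_congr rfl fun i _ => ?_
        by_cases h : ℓ i = t
        · rw [if_pos h, if_pos h, h]
        · rw [if_neg h, if_neg h, zero_mul]
      rw [step, ← Finset.sum_filter, Finset.filter_filter, hTT, Finset.sum_const, ← hqdef,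
        nsmul_eq_mul]
      field_simp
    rw [e1, e2, emax]
    have hsub : ∑ i ∈ A, (ℓ i - t) = (∑ i ∈ A, ℓ i) - p * t := by
      rw [Finset.sum_sub_distrib, Finset.sum_const, ← hpdef, nsmul_eq_mul]
    rw [hsub]
    have hrt : r * t = t - p * c * t := by rw [hr]; ring
    rw [hrt]
    ring

/-- Empirical upper-tail CVaR at level `α` (primal, reweighting form). -/
noncomputable def cvar (n : ℕ) (α : ℝ) (ℓ : Fin n → ℝ) : ℝ :=
  sSup {x : ℝ | ∃ w : Fin n → ℝ,
    (∀ i, 0 ≤ w i ∧ w i ≤ 1 / (α * n)) ∧ (∑ i, w i) = 1 ∧ x = ∑ i, w i * ℓ i}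

/-- Rockafellar–Uryasev duality: CVaR equals the minimum over `t` of
`t + (1/(α n)) ∑ max(ℓ i − t, 0)`, and this minimum is attained. -/
theorem cvar_rockafellar_uryasev (n : ℕ) (hn : 0 < n) (α : ℝ) (hα : 0 < α) (hα1 : α ≤ 1)
    (ℓ : Fin n → ℝ) :
    IsLeast {x : ℝ | ∃ t : ℝ, x = t + (1 / (α * n)) * ∑ i, max (ℓ i - t) 0}
      (cvar n α ℓ) := by
  obtain ⟨t0, htr, hp, hB⟩ := exists_quantile hn hα hα1 ℓ
  obtain ⟨w0, hw0, hs0, heq⟩ := cvar_attain hn hα ℓ t0 htr hp hB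
  set S : Set ℝ := {x : ℝ | ∃ w : Fin n → ℝ,
    (∀ i, 0 ≤ w i ∧ w i ≤ 1 / (α * n)) ∧ (∑ i, w i) = 1 ∧ x = ∑ i, w i * ℓ i} with hSdef
  have hcvar : cvar n α ℓ = sSup S := rfl
  have hmem0 : (∑ i, w0 i * ℓ i) ∈ S := ⟨w0, hw0, hs0, rfl⟩
  have hne : S.Nonempty := ⟨_, hmem0⟩
  have hub : ∀ x ∈ S, ∀ t : ℝ, x ≤ t + (1 / (α * n)) * ∑ i, max (ℓ i - t) 0 := by
    rintro x ⟨w, hw, hs, rfl⟩ t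
    exact cvar_weak ℓ w hw hs t
  have hbdd : BddAbove S := ⟨t0 + (1 / (α * n)) * ∑ i, max (ℓ i - t0) 0,
    fun x hx => hub x hx t0⟩
  constructor
  · refine ⟨t0, le_antisymm ?_ ?_⟩
    · rw [hcvar]
      exact csSup_le hne (fun x hx => hub x hx t0)
    · rw [hcvar, ← heq]
      exact le_csSup hbdd hmem0
  · rintro x ⟨t, rfl⟩
    rw [hcvar]
    exact csSup_le hne (fun y hy => hub y hy t)
end

section
/- CVaR at level α of a finite list of losses is a 1/α-weighted distributionally robust value: it equals the supremum of expectations 𝔼_Q[ℓ] over all probability distributions Q on {1,…,n} whose likelihood ratio with respect to the uniform distribution is bounded by 1/α. -/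
open Finset

/-- Empirical CVaR at level `α`, Rockafellar–Uryasev (dual) form. -/
noncomputable def cvarDual (n : ℕ) (α : ℝ) (ℓ : Fin n → ℝ) : ℝ :=
  sInf {x : ℝ | ∃ t : ℝ, x = t + (1 / (α * n)) * ∑ i, max (ℓ i - t) 0}

/-- CVaR equals the supremum of expectations `𝔼_Q[ℓ]` over probability
distributions `Q` on `{1,…,n}` with likelihood ratio w.r.t. uniform bounded by `1/α`,
i.e. `Q i ≤ 1/(α n)` for all `i`. -/
theorem cvar_eq_dro_value (n : ℕ) (hn : 0 < n) (α : ℝ) (hα : 0 < α) (hα1 : α ≤ 1)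
    (ℓ : Fin n → ℝ) :
    cvarDual n α ℓ =
      sSup {x : ℝ | ∃ Q : Fin n → ℝ,
        (∀ i, 0 ≤ Q i ∧ Q i ≤ 1 / (α * n)) ∧ (∑ i, Q i) = 1 ∧ x = ∑ i, Q i * ℓ i} := by
  classical
  set c : ℝ := 1 / (α * n) with hc_def
  have hn' : (0:ℝ) < n := by exact_mod_cast hn
  have hαn : 0 < α * n := mul_pos hα hn'
  have hc : 0 < c := by positivity
  have hcαn : c * (α * n) = 1 := one_div_mul_cancel (ne_of_gt hαn)
  set Aset := {x : ℝ | ∃ t : ℝ, x = t + c * ∑ i, max (ℓ i - t) 0} with hA_def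
  set Bset := {x : ℝ | ∃ Q : Fin n → ℝ,
      (∀ i, 0 ≤ Q i ∧ Q i ≤ c) ∧ (∑ i, Q i) = 1 ∧ x = ∑ i, Q i * ℓ i} with hB_def
  -- weak duality
  have hle : ∀ x ∈ Aset, ∀ y ∈ Bset, y ≤ x := by
    rintro x ⟨t, rfl⟩ y ⟨Q, hQ, hQ1, rfl⟩
    have key : ∀ i : Fin n, Q i * ℓ i ≤ Q i * t + c * max (ℓ i - t) 0 := by
      intro i
      have h0 := (hQ i).1
      have h1 := (hQ i).2
      have hm1 : ℓ i - t ≤ max (ℓ i - t) 0 := le_max_left _ _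
      have hm0 : (0:ℝ) ≤ max (ℓ i - t) 0 := le_max_right _ _
      calc Q i * ℓ i = Q i * t + Q i * (ℓ i - t) := by ring
        _ ≤ Q i * t + Q i * max (ℓ i - t) 0 := by
            gcongr
        _ ≤ Q i * t + c * max (ℓ i - t) 0 := by
            gcongr
    calc ∑ i, Q i * ℓ i ≤ ∑ i, (Q i * t + c * max (ℓ i - t) 0) :=
          Finset.sum_le_sum fun i _ => key i
      _ = (∑ i, Q i) * t + c * ∑ i, max (ℓ i - t) 0 := by
          rw [Finset.sum_add_distrib, ← Finset.sum_mul, Finset.mul_sum]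
      _ = t + c * ∑ i, max (ℓ i - t) 0 := by rw [hQ1, one_mul]
  -- construction of the optimal pair
  set σ := Tuple.sort ℓ with hσ_def
  have hσmono : Monotone (ℓ ∘ σ) := Tuple.monotone_sort ℓ
  set k : ℕ := min (Nat.floor (α * n)) (n - 1) with hk_def
  have hkn : k < n := lt_of_le_of_lt (min_le_right _ _) (Nat.sub_lt hn one_pos)
  have hkαn : (k:ℝ) ≤ α * n := by
    have h1 : (k:ℝ) ≤ (Nat.floor (α * n) : ℝ) := by
      exact_mod_cast min_le_left _ _
    exact h1.trans (Nat.floor_le hαn.le)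
  have hkc : (k:ℝ) * c ≤ 1 := by
    have := mul_le_mul_of_nonneg_right hkαn hc.le
    rw [mul_comm (α * n) c, hcαn] at this
    exact this
  have hαnk : α * n ≤ (k:ℝ) + 1 := by
    by_cases h : Nat.floor (α * n) ≤ n - 1
    · have hk' : k = Nat.floor (α * n) := min_eq_left h
      rw [hk']
      exact (Nat.lt_floor_add_one (α * n)).le
    · have hk' : k = n - 1 := min_eq_right (le_of_not_ge h)
      have : ((k:ℝ) + 1) = (n:ℝ) := by
        rw [hk']
        rw [Nat.cast_sub hn]
        ring
      rw [this]
      calc α * n ≤ 1 * n := by gcongr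
        _ = (n:ℝ) := one_mul _
  have hk1c : 1 ≤ ((k:ℝ) + 1) * c := by
    have := mul_le_mul_of_nonneg_right hαnk hc.le
    rw [mul_comm (α * n) c, hcαn] at this
    exact this
  set g : ℕ → ℝ := fun i => if h : i < n then ℓ (σ (Fin.rev ⟨i, h⟩)) else 0 with hg_def
  have hg_anti : ∀ i j : ℕ, i ≤ j → j < n → g j ≤ g i := by
    intro i j hij hj
    have hi : i < n := lt_of_le_of_lt hij hj
    simp only [hg_def, dif_pos hi, dif_pos hj]
    apply hσmono
    rw [Fin.rev_le_rev]
    exact hij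
  set t : ℝ := g k with ht_def
  set Q' : ℕ → ℝ := fun j => if j < k then c else if j = k then 1 - (k:ℝ) * c else 0
    with hQ'_def
  have hQ'bounds : ∀ m : ℕ, 0 ≤ Q' m ∧ Q' m ≤ c := by
    intro m
    simp only [hQ'_def]
    split_ifs with h1 h2
    · exact ⟨hc.le, le_refl c⟩
    · constructor
      · linarith
      · have : ((k:ℝ) + 1) * c = (k:ℝ) * c + c := by ring
        linarith [hk1c]
    · exact ⟨le_refl 0, hc.le⟩
  set Q : Fin n → ℝ := fun i => Q' ((Fin.rev (σ.symm i)) : ℕ) with hQ_def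
  have hQτ : ∀ j : Fin n, Q (σ (Fin.rev j)) = Q' (j : ℕ) := by
    intro j
    have h : Fin.rev (σ.symm (σ (Fin.rev j))) = j := by
      rw [Equiv.symm_apply_apply, Fin.rev_rev]
    show Q' ((Fin.rev (σ.symm (σ (Fin.rev j)))) : ℕ) = Q' (j : ℕ)
    rw [h]
  have hgj : ∀ j : Fin n, g (j : ℕ) = ℓ (σ (Fin.rev j)) := by
    intro j
    simp only [hg_def, dif_pos j.isLt, Fin.eta]
  have reindex : ∀ f : Fin n → ℝ, ∑ i, f i = ∑ j : Fin n, f (σ (Fin.rev j)) := by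
    intro f
    have h1 : ∑ j : Fin n, (f ∘ σ) (Fin.revPerm j) = ∑ j : Fin n, (f ∘ σ) j :=
      Equiv.sum_comp Fin.revPerm (f ∘ σ)
    have h2 : ∑ j : Fin n, f (σ j) = ∑ i, f i := Equiv.sum_comp σ f
    simp only [Function.comp, Fin.revPerm_apply] at h1
    rw [h1]
    exact h2.symm
  have hsplit : ∀ f : ℕ → ℝ,
      ∑ i ∈ range n, f i = ∑ i ∈ range k, f i + f k + ∑ i ∈ Ico (k+1) n, f i := by
    intro f
    rw [range_eq_Ico, ← Finset.sum_Ico_consecutive f (Nat.zero_le k) hkn.le,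
      Finset.sum_eq_sum_Ico_succ_bot hkn f, ← range_eq_Ico]
    ring
  -- sum of Q' is 1
  have hsumQ' : ∑ i ∈ range n, Q' i = 1 := by
    rw [hsplit]
    have e1 : ∑ i ∈ range k, Q' i = (k:ℝ) * c := by
      rw [Finset.sum_congr rfl (fun i hi => if_pos (mem_range.mp hi))]
      rw [Finset.sum_const, card_range, nsmul_eq_mul]
    have e2 : Q' k = 1 - (k:ℝ) * c := by
      simp [hQ'_def]
    have e3 : ∑ i ∈ Ico (k+1) n, Q' i = 0 := by
      apply Finset.sum_eq_zero
      intro i hi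
      have hik : k + 1 ≤ i := (mem_Ico.mp hi).1
      simp only [hQ'_def]
      rw [if_neg (by omega), if_neg (by omega)]
    rw [e1, e2, e3]
    ring
  -- sum of Q' * g
  have hsumQg : ∑ i ∈ range n, Q' i * g i
      = c * ∑ i ∈ range k, g i + (1 - (k:ℝ) * c) * g k := by
    rw [hsplit]
    have e1 : ∑ i ∈ range k, Q' i * g i = c * ∑ i ∈ range k, g i := by
      rw [Finset.mul_sum]
      apply Finset.sum_congr rfl
      intro i hi
      rw [hQ'_def]
      simp only []
      rw [if_pos (mem_range.mp hi)]
    have e2 : Q' k * g k = (1 - (k:ℝ) * c) * g k := by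
      simp [hQ'_def]
    have e3 : ∑ i ∈ Ico (k+1) n, Q' i * g i = 0 := by
      apply Finset.sum_eq_zero
      intro i hi
      have hik : k + 1 ≤ i := (mem_Ico.mp hi).1
      simp only [hQ'_def]
      rw [if_neg (by omega), if_neg (by omega), zero_mul]
    rw [e1, e2, e3]
    ring
  -- sum of max terms at t = g k
  have hsumMax : ∑ i ∈ range n, max (g i - t) 0 = ∑ i ∈ range k, g i - (k:ℝ) * t := by
    rw [hsplit]
    have e1 : ∑ i ∈ range k, max (g i - t) 0 = ∑ i ∈ range k, g i - (k:ℝ) * t := by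
      have : ∀ i ∈ range k, max (g i - t) 0 = g i - t := by
        intro i hi
        have hik : i < k := mem_range.mp hi
        have := hg_anti i k hik.le hkn
        rw [ht_def]
        exact max_eq_left (by linarith)
      rw [Finset.sum_congr rfl this, Finset.sum_sub_distrib, Finset.sum_const,
        card_range, nsmul_eq_mul]
    have e2 : max (g k - t) 0 = 0 := by
      rw [ht_def]
      simp
    have e3 : ∑ i ∈ Ico (k+1) n, max (g i - t) 0 = 0 := by
      apply Finset.sum_eq_zero
      intro i hi
      have h1 : k + 1 ≤ i := (mem_Ico.mp hi).1
      have h2 : i < n := (mem_Ico.mp hi).2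
      have := hg_anti k i (by omega) h2
      rw [ht_def]
      exact max_eq_right (by linarith)
    rw [e1, e2, e3]
    ring
  set v : ℝ := ∑ i ∈ range n, Q' i * g i with hv_def
  -- v ∈ Aset
  have vA : v ∈ Aset := by
    refine ⟨t, ?_⟩
    have h1 : ∑ i, max (ℓ i - t) 0 = ∑ j : Fin n, max (g (j:ℕ) - t) 0 := by
      rw [reindex (fun i => max (ℓ i - t) 0)]
      exact Finset.sum_congr rfl fun j _ => by rw [hgj j]
    rw [h1, Fin.sum_univ_eq_sum_range (fun m => max (g m - t) 0) n, hsumMax,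
      hsumQg]
    ring
  -- v ∈ Bset
  have vB : v ∈ Bset := by
    refine ⟨Q, fun i => hQ'bounds _, ?_, ?_⟩
    · rw [reindex Q]
      have : ∑ j : Fin n, Q (σ (Fin.rev j)) = ∑ j : Fin n, Q' (j:ℕ) :=
        Finset.sum_congr rfl fun j _ => hQτ j
      rw [this, Fin.sum_univ_eq_sum_range Q' n, hsumQ']
    · rw [reindex (fun i => Q i * ℓ i)]
      have : ∑ j : Fin n, Q (σ (Fin.rev j)) * ℓ (σ (Fin.rev j))
          = ∑ j : Fin n, Q' (j:ℕ) * g (j:ℕ) :=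
        Finset.sum_congr rfl fun j _ => by rw [hQτ j, hgj j]
      rw [this, Fin.sum_univ_eq_sum_range (fun m => Q' m * g m) n]
  -- conclude
  have h1 : cvarDual n α ℓ = v := by
    rw [cvarDual]
    apply le_antisymm
    · exact csInf_le ⟨v, fun x hx => hle x hx v vB⟩ vA
    · exact le_csInf ⟨v, vA⟩ fun x hx => hle x hx v vB
  have h2 : sSup Bset = v := by
    apply le_antisymm
    · exact csSup_le ⟨v, vB⟩ fun y hy => hle v vA y hy
    · exact le_csSup ⟨v, fun y hy => hle v vA y hy⟩ vB
  rw [h1, ← h2]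
end
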